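/- For all natural numbers n and λ, the sum over k from 0 to n of C(n,k) * C(n+λn, n-k) * H_{λn+k} equals C(2n+λn, n) * (2*H_{λn+n} - H_{λn+2n}). -/

import Mathlib

/-!
Write `x^{(r)}` for the falling factorial. Chu–Vandermonde gives the polynomial identity
`(n + x)^{(n)} = ∑_{i+j=n} C(n,i) n^{(i)} x^{(j)}`. At an integer `t ≥ r` the logarithmic
derivative of `x^{(r)}` is `∑_{i<r} 1/(t-i) = H_t - H_{t-r}`, so evaluating the identity and its
derivative at `x = M = n + λn` gives `∑ C(n,i) C(M,j) = C(n+M,n)` and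
`∑ C(n,i) C(M,j) (H_M - H_{M-j}) = C(n+M,n) (H_{n+M} - H_M)`; subtracting yields the theorem.
-/

open Finset Polynomial

def harmonicQ (m : Nat) : ℚ := ∑ j ∈ Finset.range m, (1 : ℚ) / (j + 1)

theorem descPochhammer_smeval_eq_comp {R : Type*} [CommRing R] (k : ℕ) (q : R[X]) :
    (descPochhammer ℤ k).smeval q = (descPochhammer R k).comp q := by
  rw [← aeval_eq_smeval, ← descPochhammer_map (Int.castRingHom R), comp, eval₂_map, aeval_def]
  congr 1

theorem descPochhammer_comp_C_add_X {R : Type*} [CommRing R] (n : ℕ) (a : R) :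
    (descPochhammer R n).comp (C a + X) = ∑ ij ∈ antidiagonal n,
      C (n.choose ij.1 * (descPochhammer R ij.1).eval a) * descPochhammer R ij.2 := by
  rw [← descPochhammer_smeval_eq_comp, Ring.descPochhammer_smeval_add n (Commute.all _ _)]
  refine sum_congr rfl fun ij _ => ?_
  rw [descPochhammer_smeval_eq_comp, descPochhammer_smeval_eq_comp, comp_X, comp_C, C_mul,
    ← C_eq_natCast]
  ring

theorem harmonicQ_succ (m : ℕ) : harmonicQ (m + 1) = harmonicQ m + 1 / (m + 1) := by
  simp [harmonicQ, sum_range_succ]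

theorem eval_derivative_descPochhammer {r t : ℕ} (h : r ≤ t) :
    (derivative (descPochhammer ℚ r)).eval (t : ℚ) =
      t.descFactorial r * (harmonicQ t - harmonicQ (t - r)) := by
  induction r with
  | zero => simp
  | succ r ih =>
    obtain ⟨s, hs⟩ : ∃ s, t - r = s + 1 := ⟨t - r - 1, by omega⟩
    have hts : t - (r + 1) = s := by omega
    have hs' : (t : ℚ) - r = s + 1 := by
      rw [← Nat.cast_sub (by omega : r ≤ t), hs]; push_cast; ring
    rw [descPochhammer_succ_right, derivative_mul, eval_add, eval_mul, eval_mul, ih (by omega),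
      descPochhammer_eval_eq_descFactorial, Nat.descFactorial_succ, hs, hts, harmonicQ_succ]
    simp only [derivative_sub, derivative_X, derivative_natCast, sub_zero, eval_one, eval_sub,
      eval_X, eval_natCast, hs']
    push_cast
    field_simp
    ring

theorem Nat.choose_mul_descFactorial_mul_descFactorial {n i j : ℕ} (M : ℕ) (h : i + j = n) :
    n.choose i * n.descFactorial i * M.descFactorial j =
      n.factorial * (n.choose i * M.choose j) := by
  rw [Nat.descFactorial_eq_factorial_mul_choose M j,
    ← Nat.factorial_mul_descFactorial (by omega : i ≤ n), show n - i = j by omega]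
  ring

theorem sum_antidiagonal_choose_mul_choose_mul_harmonicQ_sub {n M : ℕ} (h : n ≤ M) :
    ∑ ij ∈ antidiagonal n, (n.choose ij.1 * M.choose ij.2 : ℚ) * harmonicQ (M - ij.2) =
      (n + M).choose n * (2 * harmonicQ M - harmonicQ (n + M)) := by
  set w : ℕ × ℕ → ℚ := fun ij => n.choose ij.1 * M.choose ij.2
  have hP := descPochhammer_comp_C_add_X n (n : ℚ)
  have hcast : (n : ℚ) + M = (n + M : ℕ) := by push_cast; ring
  have hcoef : ∀ ij ∈ antidiagonal n,
      (n.choose ij.1 * n.descFactorial ij.1 * M.descFactorial ij.2 : ℚ) = n.factorial * w ij :=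
    fun ij hij => by
      simp only [w]
      exact_mod_cast Nat.choose_mul_descFactorial_mul_descFactorial M (mem_antidiagonal.mp hij)
  have hfac : (n.factorial : ℚ) ≠ 0 := by positivity
  have hsum : ∑ ij ∈ antidiagonal n, w ij = (n + M).choose n := by
    have := congrArg (eval (M : ℚ)) hP
    simp only [eval_comp, eval_add, eval_C, eval_X, hcast, eval_finsetSum, eval_mul,
      descPochhammer_eval_eq_descFactorial] at this
    rw [sum_congr rfl hcoef, ← mul_sum, Nat.descFactorial_eq_factorial_mul_choose,
      Nat.cast_mul] at this
    exact (mul_left_cancel₀ hfac this).symm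
  have hderiv : ∑ ij ∈ antidiagonal n, w ij * (harmonicQ M - harmonicQ (M - ij.2)) =
      (n + M).choose n * (harmonicQ (n + M) - harmonicQ M) := by
    have := congrArg (fun p => (derivative p).eval (M : ℚ)) hP
    simp only [derivative_comp, derivative_add, derivative_C, derivative_X, zero_add, one_mul,
      eval_comp, eval_add, eval_C, eval_X, hcast, eval_finsetSum, eval_mul, derivative_sum,
      derivative_C_mul, descPochhammer_eval_eq_descFactorial] at this
    rw [eval_derivative_descPochhammer (by omega), Nat.add_sub_cancel_left,
      Nat.descFactorial_eq_factorial_mul_choose, Nat.cast_mul] at this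
    rw [sum_congr rfl fun ij hij => by
      rw [eval_derivative_descPochhammer (by have := (mem_antidiagonal.mp hij); omega),
        ← mul_assoc, hcoef ij hij, mul_assoc], ← mul_sum, mul_assoc] at this
    exact (mul_left_cancel₀ hfac this).symm
  calc ∑ ij ∈ antidiagonal n, w ij * harmonicQ (M - ij.2)
      = (∑ ij ∈ antidiagonal n, w ij) * harmonicQ M -
          ∑ ij ∈ antidiagonal n, w ij * (harmonicQ M - harmonicQ (M - ij.2)) := by
        rw [sum_mul, ← sum_sub_distrib]; congr! 1 with ij; ring
    _ = (n + M).choose n * (2 * harmonicQ M - harmonicQ (n + M)) := by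
        rw [hsum, hderiv]; ring

theorem stmt1 (n l : ℕ) :
    ∑ k ∈ range (n + 1), (n.choose k : ℚ) * ((n + l * n).choose (n - k) : ℚ) * harmonicQ (l * n + k)
      = ((2 * n + l * n).choose n : ℚ) * (2 * harmonicQ (l * n + n) - harmonicQ (l * n + 2 * n)) := by
  have key := sum_antidiagonal_choose_mul_choose_mul_harmonicQ_sub (Nat.le_add_right n (l * n))
  rw [Nat.sum_antidiagonal_eq_sum_range_succ
    (fun i j => (n.choose i * (n + l * n).choose j : ℚ) * harmonicQ (n + l * n - j))] at key
  rw [show 2 * n + l * n = n + (n + l * n) by ring, show l * n + 2 * n = n + (n + l * n) by ring,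
    show l * n + n = n + l * n by ring, ← key]
  refine sum_congr rfl fun k hk => ?_
  rw [show l * n + k = n + l * n - (n - k) by have := mem_range.mp hk; omega]
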